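/- With $\phi_\varepsilon$ and $\tilde\gamma_\varepsilon$ as above, $q_\varepsilon := \int_{-1}^1 \phi_\varepsilon(\xi)^2\, d\tilde\gamma_\varepsilon(\xi) \to 1/4$ as $\varepsilon\to 0^+$. -/

import Mathlib

/-!
By evenness of `H`, `I_ε = 2 ∫_0^1 e^{H/ε}` and `|φ_ε(ξ)|` grows with `|ξ|` up to
`φ_ε(±1) = ±1/2`; hence `q_ε ≤ 1/4`, and `q_ε ≥ φ_ε(1/2)² (1 - γ̃_ε([-1/2, 1/2]))`.
Two Laplace-type estimates close the gap: `e^{H/ε}` concentrates near the strict maximum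
point `0` of `H`, so `φ_ε(1/2) = (1 - ∫_{1/2}^1 e^{H/ε} / ∫_0^1 e^{H/ε}) / 2 → 1/2`, while
`e^{-H/ε}` concentrates near the zeros `±1` of `H`, so `γ̃_ε([-1/2, 1/2]) → 0`.
-/

open MeasureTheory Filter Set Topology Real

lemma ContinuousOn.intervalIntegrable_exp_div {f : ℝ → ℝ} {s : Set ℝ} (hf : ContinuousOn f s)
    {a b : ℝ} (hab : uIcc a b ⊆ s) (ε : ℝ) :
    IntervalIntegrable (fun x => exp (f x / ε)) volume a b :=
  (continuous_exp.comp_continuousOn ((hf.mono hab).div_const ε)).intervalIntegrable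

lemma tendsto_mul_exp_neg_div_nhdsGT_zero {a : ℝ} (ha : 0 < a) (C : ℝ) :
    Tendsto (fun ε : ℝ => C * exp (-(a / ε))) (𝓝[>] 0) (𝓝 0) := by
  have h : Tendsto (fun ε : ℝ => a / ε) (𝓝[>] 0) atTop := by
    simpa [div_eq_mul_inv] using tendsto_inv_nhdsGT_zero.const_mul_atTop ha
  simpa using (tendsto_exp_atBot.comp (tendsto_neg_atTop_atBot.comp h)).const_mul C

lemma ContinuousWithinAt.exists_Icc_subset_forall_lt {f : ℝ → ℝ} {a b x₀ y : ℝ} (hab : a < b)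
    (hx₀ : x₀ ∈ Icc a b) (hf : ContinuousWithinAt f (Icc a b) x₀) (hy : y < f x₀) :
    ∃ u v, u < v ∧ Icc u v ⊆ Icc a b ∧ ∀ x ∈ Icc u v, y < f x := by
  obtain ⟨δ, hδ, hball⟩ := Metric.mem_nhdsWithin_iff.mp (hf (Ioi_mem_nhds hy))
  refine ⟨max a (x₀ - δ / 2), min b (x₀ + δ / 2), ?_, ?_, fun x hx => hball ⟨?_, ?_⟩⟩
  · simp only [max_lt_iff, lt_min_iff]
    refine ⟨⟨?_, ?_⟩, ?_, ?_⟩ <;> linarith [hx₀.1, hx₀.2]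
  · exact Icc_subset_Icc (le_max_left _ _) (min_le_left _ _)
  · rw [Metric.mem_ball, Real.dist_eq, abs_lt]
    constructor <;> linarith [le_max_right a (x₀ - δ / 2), min_le_right b (x₀ + δ / 2), hx.1, hx.2]
  · exact ⟨le_trans (le_max_left _ _) hx.1, le_trans hx.2 (min_le_left _ _)⟩

theorem tendsto_integral_exp_div_div_integral_exp_div {f : ℝ → ℝ} {a b s t x₀ : ℝ} (hab : a < b)
    (hst : s ≤ t) (hf : ContinuousOn f (Icc a b)) (hsub : Icc s t ⊆ Icc a b) (hx₀ : x₀ ∈ Icc a b)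
    (hlt : ∀ x ∈ Icc s t, f x < f x₀) :
    Tendsto (fun ε => (∫ x in s..t, exp (f x / ε)) / ∫ x in a..b, exp (f x / ε))
      (𝓝[>] 0) (𝓝 0) := by
  obtain ⟨ξ, hξ, hmax⟩ := isCompact_Icc.exists_isMaxOn (nonempty_Icc.2 hst) (hf.mono hsub)
  obtain ⟨y, hcy, hy⟩ := exists_between (hlt ξ hξ)
  obtain ⟨u, v, huv, huvab, hgt⟩ := (hf x₀ hx₀).exists_Icc_subset_forall_lt hab hx₀ hy
  have hnum : ∀ ε > 0, ∫ x in s..t, exp (f x / ε) ≤ exp (f ξ / ε) * (t - s) := fun ε hε => by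
    have hbound : ∀ x ∈ uIoc s t, ‖exp (f x / ε)‖ ≤ exp (f ξ / ε) := fun x hx => by
      rw [Real.norm_eq_abs, abs_of_pos (exp_pos _)]
      gcongr
      exact hmax (Ioc_subset_Icc_self ((uIoc_of_le hst) ▸ hx))
    simpa [abs_of_nonneg (sub_nonneg.2 hst)] using
      (le_abs_self _).trans (intervalIntegral.norm_integral_le_of_norm_le_const hbound)
  have hden : ∀ ε > 0, exp (y / ε) * (v - u) ≤ ∫ x in a..b, exp (f x / ε) := fun ε hε => by
    calc exp (y / ε) * (v - u) = ∫ _ in u..v, exp (y / ε) := by simp [mul_comm]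
      _ ≤ ∫ x in u..v, exp (f x / ε) :=
          intervalIntegral.integral_mono_on huv.le intervalIntegrable_const
            (hf.intervalIntegrable_exp_div ((uIcc_of_le huv.le).trans_subset huvab) ε)
            fun x hx => by gcongr; exact (hgt x hx).le
      _ ≤ ∫ x in a..b, exp (f x / ε) :=
          intervalIntegral.integral_mono_interval (huvab (left_mem_Icc.2 huv.le)).1 huv.le
            (huvab (right_mem_Icc.2 huv.le)).2 (Eventually.of_forall fun _ => (exp_pos _).le)
            (hf.intervalIntegrable_exp_div (uIcc_of_le hab.le).subset ε)
  refine tendsto_of_tendsto_of_tendsto_of_le_of_le' tendsto_const_nhds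
    (tendsto_mul_exp_neg_div_nhdsGT_zero (a := y - f ξ) (sub_pos.2 hcy) ((t - s) / (v - u)))
    ?_ ?_
  · exact Eventually.of_forall fun ε =>
      div_nonneg (intervalIntegral.integral_nonneg hst fun _ _ => (exp_pos _).le)
        (intervalIntegral.integral_nonneg hab.le fun _ _ => (exp_pos _).le)
  · filter_upwards [self_mem_nhdsWithin] with ε (hε : 0 < ε)
    calc (∫ x in s..t, exp (f x / ε)) / ∫ x in a..b, exp (f x / ε)
        ≤ (exp (f ξ / ε) * (t - s)) / (exp (y / ε) * (v - u)) :=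
          div_le_div₀ (by positivity) (hnum ε hε) (mul_pos (exp_pos _) (sub_pos.2 huv)) (hden ε hε)
      _ = (t - s) / (v - u) * exp (-((y - f ξ) / ε)) := by
          rw [show -((y - f ξ) / ε) = f ξ / ε - y / ε by ring, exp_sub]
          field_simp

section Even

variable {ρ : ℝ → ℝ}

lemma integral_zero_neg_of_even (heven : ∀ x, ρ (-x) = ρ x) (ξ : ℝ) :
    ∫ x in (0:ℝ)..-ξ, ρ x = -∫ x in (0:ℝ)..ξ, ρ x := by
  have h := intervalIntegral.integral_comp_neg (a := ξ) (b := 0) ρ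
  simp only [heven, neg_zero] at h
  rw [← h, intervalIntegral.integral_symm]

lemma integral_neg_self_of_even (heven : ∀ x, ρ (-x) = ρ x) {a : ℝ}
    (hint : IntervalIntegrable ρ volume (-a) a) :
    ∫ x in -a..a, ρ x = 2 * ∫ x in (0:ℝ)..a, ρ x := by
  have h0 : (0:ℝ) ∈ uIcc (-a) a := by
    rcases le_total 0 a with h | h
    · exact mem_uIcc.2 (Or.inl ⟨by linarith, h⟩)
    · exact mem_uIcc.2 (Or.inr ⟨h, by linarith⟩)
  rw [← intervalIntegral.integral_add_adjacent_intervals (hint.mono_set (uIcc_subset_uIcc_left h0))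
    (hint.mono_set (uIcc_subset_uIcc_right h0)), intervalIntegral.integral_symm _ (-a),
    integral_zero_neg_of_even heven, neg_neg, two_mul]

lemma abs_integral_zero_of_even (heven : ∀ x, ρ (-x) = ρ x) (hρ : ∀ x, 0 ≤ ρ x) (ξ : ℝ) :
    |∫ x in (0:ℝ)..ξ, ρ x| = ∫ x in (0:ℝ)..|ξ|, ρ x := by
  have h : |∫ x in (0:ℝ)..ξ, ρ x| = |∫ x in (0:ℝ)..|ξ|, ρ x| := by
    rcases abs_choice ξ with h | h
    · rw [h]
    · rw [h, integral_zero_neg_of_even heven, abs_neg]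
  rw [h, abs_of_nonneg (intervalIntegral.integral_nonneg (abs_nonneg ξ) fun x _ => hρ x)]

lemma abs_integral_zero_le_of_even (heven : ∀ x, ρ (-x) = ρ x) (hρ : ∀ x, 0 ≤ ρ x) {ξ ζ : ℝ}
    (h : |ξ| ≤ |ζ|) (hint : IntervalIntegrable ρ volume 0 |ζ|) :
    |∫ x in (0:ℝ)..ξ, ρ x| ≤ |∫ x in (0:ℝ)..ζ, ρ x| := by
  rw [abs_integral_zero_of_even heven hρ, abs_integral_zero_of_even heven hρ]
  exact intervalIntegral.integral_mono_interval le_rfl (abs_nonneg ξ) h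
    (Eventually.of_forall hρ) hint

end Even

section WeightedAverage

variable {ψ w : ℝ → ℝ} {a b : ℝ}

lemma integral_mul_div_integral_le {M : ℝ} (hab : a ≤ b)
    (hψw : IntervalIntegrable (fun x => ψ x * w x) volume a b)
    (hw : IntervalIntegrable w volume a b) (hw₀ : ∀ x ∈ Icc a b, 0 ≤ w x)
    (hψ : ∀ x ∈ Icc a b, ψ x ≤ M) (hZ : 0 < ∫ x in a..b, w x) :
    (∫ x in a..b, ψ x * w x) / (∫ x in a..b, w x) ≤ M := by
  rw [div_le_iff₀ hZ, ← intervalIntegral.integral_const_mul]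
  exact intervalIntegral.integral_mono_on hab hψw (hw.const_mul M)
    fun x hx => mul_le_mul_of_nonneg_right (hψ x hx) (hw₀ x hx)

lemma mul_one_sub_div_le_integral_mul_div_integral {c d m : ℝ} (hac : a ≤ c) (hcd : c ≤ d)
    (hdb : d ≤ b) (hψw : IntervalIntegrable (fun x => ψ x * w x) volume a b)
    (hw : IntervalIntegrable w volume a b) (hw₀ : ∀ x ∈ Icc a b, 0 ≤ w x)
    (hψ₀ : ∀ x ∈ Icc c d, 0 ≤ ψ x) (hψ : ∀ x ∈ Icc a b, x ∉ Ioo c d → m ≤ ψ x)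
    (hZ : 0 < ∫ x in a..b, w x) :
    m * (1 - (∫ x in c..d, w x) / ∫ x in a..b, w x) ≤
      (∫ x in a..b, ψ x * w x) / ∫ x in a..b, w x := by
  have hsub : ∀ {u v}, a ≤ u → u ≤ v → v ≤ b → uIcc u v ⊆ uIcc a b := fun hu huv hv => by
    rw [uIcc_of_le huv, uIcc_of_le (hu.trans (huv.trans hv))]
    exact Icc_subset_Icc hu hv
  have split : ∀ f : ℝ → ℝ, IntervalIntegrable f volume a b →
      ∫ x in a..b, f x = (∫ x in a..c, f x) + (∫ x in c..d, f x) + ∫ x in d..b, f x := by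
    intro f hf
    rw [intervalIntegral.integral_add_adjacent_intervals
        (hf.mono_set (hsub le_rfl hac (hcd.trans hdb))) (hf.mono_set (hsub hac hcd hdb)),
      intervalIntegral.integral_add_adjacent_intervals
        (hf.mono_set (hsub le_rfl (hac.trans hcd) hdb))
        (hf.mono_set (hsub (hac.trans hcd) hdb le_rfl))]
  have outer : ∀ {u v}, a ≤ u → u ≤ v → v ≤ b → (∀ x ∈ Icc u v, x ∉ Ioo c d) →
      m * ∫ x in u..v, w x ≤ ∫ x in u..v, ψ x * w x := fun hu huv hv hout => by
    rw [← intervalIntegral.integral_const_mul]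
    refine intervalIntegral.integral_mono_on huv ((hw.mono_set (hsub hu huv hv)).const_mul m)
      (hψw.mono_set (hsub hu huv hv)) fun x hx => ?_
    have hx' : x ∈ Icc a b := ⟨hu.trans hx.1, hx.2.trans hv⟩
    exact mul_le_mul_of_nonneg_right (hψ x hx' (hout x hx)) (hw₀ x hx')
  have left := outer le_rfl hac (hcd.trans hdb) fun x hx hx' => hx'.1.not_ge hx.2
  have right := outer (hac.trans hcd) hdb le_rfl fun x hx hx' => hx'.2.not_ge hx.1
  have middle : 0 ≤ ∫ x in c..d, ψ x * w x := intervalIntegral.integral_nonneg hcd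
    fun x hx => mul_nonneg (hψ₀ x hx) (hw₀ x ⟨hac.trans hx.1, hx.2.trans hdb⟩)
  rw [mul_one_sub, mul_div_assoc', sub_div' hZ.ne', div_le_div_iff_of_pos_right hZ,
    split _ hw, split _ hψw]
  linarith

end WeightedAverage

/-- The function `φ_ε` of the paper. -/
noncomputable def phi (H : ℝ → ℝ) (ε ξ : ℝ) : ℝ :=
  (∫ η in (-1:ℝ)..1, exp (H η / ε))⁻¹ * ∫ η in (0:ℝ)..ξ, exp (H η / ε)

section Phi

variable {H : ℝ → ℝ}

lemma continuousOn_phi (hcont : ContinuousOn H (Icc (-1) 1)) (ε : ℝ) :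
    ContinuousOn (phi H ε) (Icc (-1) 1) := by
  have h0 : (0:ℝ) ∈ uIcc (-1) 1 := by simp
  have hprim := intervalIntegral.continuousOn_primitive_interval'
    (hcont.intervalIntegrable_exp_div (uIcc_of_le (by norm_num : (-1:ℝ) ≤ 1)).subset ε) h0
  rw [uIcc_of_le (by norm_num)] at hprim
  exact continuousOn_const.mul hprim

lemma sq_phi_le_sq_phi (hcont : ContinuousOn H (Icc (-1) 1)) (heven : ∀ ξ, H (-ξ) = H ξ)
    (ε : ℝ) {ξ ζ : ℝ} (h : |ξ| ≤ |ζ|) (hζ : |ζ| ≤ 1) :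
    phi H ε ξ ^ 2 ≤ phi H ε ζ ^ 2 := by
  have hmono := abs_integral_zero_le_of_even (ρ := fun η => exp (H η / ε)) (by simp [heven])
    (fun _ => (exp_pos _).le) h (hcont.intervalIntegrable_exp_div ?_ ε)
  · rw [phi, phi, sq_le_sq, abs_mul, abs_mul]
    exact mul_le_mul_of_nonneg_left hmono (abs_nonneg _)
  · rw [uIcc_of_le (abs_nonneg ζ)]
    exact Icc_subset_Icc (by norm_num) hζ

lemma phi_eq_one_sub_div (hcont : ContinuousOn H (Icc (-1) 1)) (heven : ∀ ξ, H (-ξ) = H ξ)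
    (ε ξ : ℝ) (hξ : ξ ∈ Icc (-1:ℝ) 1) :
    phi H ε ξ = (1 - (∫ η in ξ..1, exp (H η / ε)) / ∫ η in (0:ℝ)..1, exp (H η / ε)) / 2 := by
  have hint : ∀ a b : ℝ, a ∈ Icc (-1:ℝ) 1 → b ∈ Icc (-1:ℝ) 1 →
      IntervalIntegrable (fun η => exp (H η / ε)) volume a b := fun _ _ ha hb =>
    hcont.intervalIntegrable_exp_div (uIcc_subset_Icc ha hb) ε
  have hP : 0 < ∫ η in (0:ℝ)..1, exp (H η / ε) :=
    intervalIntegral.intervalIntegral_pos_of_pos_on (hint _ _ (by norm_num) (by norm_num))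
      (fun _ _ => exp_pos _) one_pos
  have hsplit := intervalIntegral.integral_add_adjacent_intervals
    (hint 0 ξ (by norm_num) hξ) (hint ξ 1 hξ (by norm_num))
  rw [phi, integral_neg_self_of_even (ρ := fun η => exp (H η / ε)) (a := 1) (by simp [heven])
    (hint (-1) 1 (by norm_num) (by norm_num))]
  field_simp
  linarith

lemma phi_one (hcont : ContinuousOn H (Icc (-1) 1)) (heven : ∀ ξ, H (-ξ) = H ξ) (ε : ℝ) :
    phi H ε 1 = 1 / 2 := by
  simp [phi_eq_one_sub_div hcont heven ε 1 (by norm_num)]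

lemma sq_phi_le_one_fourth (hcont : ContinuousOn H (Icc (-1) 1)) (heven : ∀ ξ, H (-ξ) = H ξ)
    (ε : ℝ) {ξ : ℝ} (hξ : ξ ∈ Icc (-1:ℝ) 1) : phi H ε ξ ^ 2 ≤ 1 / 4 := by
  calc phi H ε ξ ^ 2 ≤ phi H ε 1 ^ 2 :=
        sq_phi_le_sq_phi hcont heven ε (by rw [abs_one]; exact abs_le.2 hξ) (by simp)
    _ = 1 / 4 := by rw [phi_one hcont heven]; norm_num

lemma sq_phi_half_le_sq_phi (hcont : ContinuousOn H (Icc (-1) 1)) (heven : ∀ ξ, H (-ξ) = H ξ)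
    (ε : ℝ) {ξ : ℝ} (hξ : ξ ∈ Icc (-1:ℝ) 1) (hξ' : ξ ∉ Ioo (-(1 / 2)) (1 / 2)) :
    phi H ε (1 / 2) ^ 2 ≤ phi H ε ξ ^ 2 := by
  refine sq_phi_le_sq_phi hcont heven ε ?_ (abs_le.2 hξ)
  rw [abs_of_pos (by norm_num : (0:ℝ) < 1 / 2), ← not_lt]
  exact fun h => hξ' (abs_lt.1 h)

lemma tendsto_phi_half (hcont : ContinuousOn H (Icc (-1) 1)) (heven : ∀ ξ, H (-ξ) = H ξ)
    (h0 : H 0 = 1) (hlt : ∀ ξ ∈ Icc (-1:ℝ) 1, ξ ≠ 0 → H ξ < 1) :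
    Tendsto (fun ε => phi H ε (1 / 2)) (𝓝[>] 0) (𝓝 (1 / 2)) := by
  have htail := tendsto_integral_exp_div_div_integral_exp_div (s := 1 / 2) (t := 1) (x₀ := 0)
    one_pos (by norm_num) (hcont.mono (Icc_subset_Icc (by norm_num) le_rfl))
    (Icc_subset_Icc (by norm_num) le_rfl) (by norm_num) fun x hx =>
      h0 ▸ hlt x ⟨by linarith [hx.1], hx.2⟩ (by linarith [hx.1])
  convert ((tendsto_const_nhds (x := (1:ℝ))).sub htail |>.div_const 2).congr fun ε =>
    (phi_eq_one_sub_div hcont heven ε (1 / 2) (by norm_num)).symm using 2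
  norm_num

lemma intervalIntegrable_sq_phi_mul_exp_neg_div (hcont : ContinuousOn H (Icc (-1) 1)) (ε : ℝ) :
    IntervalIntegrable (fun ξ => phi H ε ξ ^ 2 * exp (-H ξ / ε)) volume (-1) 1 :=
  (((continuousOn_phi hcont ε).pow 2).mul (continuous_exp.comp_continuousOn
    (hcont.neg.div_const ε))).intervalIntegrable_of_Icc (by norm_num)

lemma tendsto_integral_exp_neg_div_center (hcont : ContinuousOn H (Icc (-1) 1)) (h1 : H 1 = 0)
    (hpos : ∀ ξ ∈ Ioo (-1:ℝ) 1, 0 < H ξ) :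
    Tendsto (fun ε => (∫ ξ in -(1 / 2)..1 / 2, exp (-H ξ / ε)) / ∫ ξ in (-1:ℝ)..1, exp (-H ξ / ε))
      (𝓝[>] 0) (𝓝 0) :=
  tendsto_integral_exp_div_div_integral_exp_div (f := fun x => -H x) (x₀ := 1) (by norm_num)
    (by norm_num) hcont.neg (Icc_subset_Icc (by norm_num) (by norm_num)) (by norm_num)
    fun x hx => by simpa [h1] using hpos x ⟨by linarith [hx.1], by linarith [hx.2]⟩

end Phi

theorem stmt6_general (H : ℝ → ℝ)
    (hcont : ContinuousOn H (Set.Icc (-1) 1))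
    (heven : ∀ ξ, H (-ξ) = H ξ)
    (h0 : H 0 = 1) (h1 : H 1 = 0)
    (hpos : ∀ ξ ∈ Set.Ioo (-1:ℝ) 1, 0 < H ξ)
    (hlt : ∀ ξ ∈ Set.Icc (-1:ℝ) 1, ξ ≠ 0 → H ξ < 1) :
    Tendsto (fun ε : ℝ =>
        (∫ ξ in (-1:ℝ)..1,
            ((∫ η in (-1:ℝ)..1, Real.exp (H η / ε))⁻¹ *
              ∫ η in (0:ℝ)..ξ, Real.exp (H η / ε))^2 * Real.exp (-H ξ / ε)) /
          (∫ ξ in (-1:ℝ)..1, Real.exp (-H ξ / ε)))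
      (nhdsWithin 0 (Set.Ioi 0)) (nhds (1/4)) := by
  have hw : ∀ ε : ℝ, IntervalIntegrable (fun ξ => exp (-H ξ / ε)) volume (-1) 1 :=
    hcont.neg.intervalIntegrable_exp_div (uIcc_of_le (by norm_num)).subset
  have hψw := intervalIntegrable_sq_phi_mul_exp_neg_div hcont
  have hZ : ∀ ε : ℝ, 0 < ∫ ξ in (-1:ℝ)..1, exp (-H ξ / ε) := fun ε =>
    intervalIntegral.intervalIntegral_pos_of_pos_on (hw ε) (fun _ _ => exp_pos _) (by norm_num)
  show Tendsto (fun ε => (∫ ξ in (-1:ℝ)..1, phi H ε ξ ^ 2 * exp (-H ξ / ε)) /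
    ∫ ξ in (-1:ℝ)..1, exp (-H ξ / ε)) _ _
  refine tendsto_of_tendsto_of_tendsto_of_le_of_le (g := fun ε => phi H ε (1 / 2) ^ 2 *
      (1 - (∫ ξ in -(1 / 2)..1 / 2, exp (-H ξ / ε)) / ∫ ξ in (-1:ℝ)..1, exp (-H ξ / ε)))
    ?_ tendsto_const_nhds (fun ε => ?_) (fun ε => ?_)
  · rw [show (1 / 4 : ℝ) = (1 / 2) ^ 2 * (1 - 0) by norm_num]
    exact ((tendsto_phi_half hcont heven h0 hlt).pow 2).mul (tendsto_const_nhds.sub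
      (tendsto_integral_exp_neg_div_center hcont h1 hpos))
  · exact mul_one_sub_div_le_integral_mul_div_integral (by norm_num) (by norm_num)
      (by norm_num) (hψw ε) (hw ε) (fun _ _ => (exp_pos _).le) (fun _ _ => sq_nonneg _)
      (fun _ hx hx' => sq_phi_half_le_sq_phi hcont heven ε hx hx') (hZ ε)
  · exact integral_mul_div_integral_le (by norm_num) (hψw ε) (hw ε) (fun _ _ => (exp_pos _).le)
      (fun _ hx => sq_phi_le_one_fourth hcont heven ε hx) (hZ ε)

/-- `q_ε = ∫_{-1}^1 φ_ε² dγ̃_ε → 1/4` as `ε → 0⁺`, where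
`φ_ε(ξ) = I_ε⁻¹ ∫_0^ξ e^{H/ε}` and `γ̃_ε = Z_ε⁻¹ e^{-H/ε} dξ`. -/
theorem stmt6 (H : ℝ → ℝ)
    (hcont : ContinuousOn H (Set.Icc (-1) 1))
    (heven : ∀ ξ, H (-ξ) = H ξ)
    (h0 : H 0 = 1) (h1 : H 1 = 0) (hm1 : H (-1) = 0)
    (hpos : ∀ ξ ∈ Set.Ioo (-1:ℝ) 1, 0 < H ξ)
    (hlt : ∀ ξ ∈ Set.Icc (-1:ℝ) 1, ξ ≠ 0 → H ξ < 1) :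
    Tendsto (fun ε : ℝ =>
        (∫ ξ in (-1:ℝ)..1,
            ((∫ η in (-1:ℝ)..1, Real.exp (H η / ε))⁻¹ *
              ∫ η in (0:ℝ)..ξ, Real.exp (H η / ε))^2 * Real.exp (-H ξ / ε)) /
          (∫ ξ in (-1:ℝ)..1, Real.exp (-H ξ / ε)))
      (nhdsWithin 0 (Set.Ioi 0)) (nhds (1/4)) :=
  stmt6_general H hcont heven h0 h1 hpos hlt
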